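/- Fix n ≥ 1 and let F : (Fin n → ℝ) → (Fin n → ℝ) be an odd map, i.e. F(−z) = −F(z) for all z. For real numbers c ≠ 0, a, m and s > 0, define the standardize–predict–destandardize imputation operator Imp(x; m, s) = s • F(s⁻¹ • (x − m•𝟙)) + m•𝟙, where 𝟙 ∈ ℝⁿ is the all-ones vector. Then Imp(c•x + a•𝟙; c*m + a, |c|*s) = c • Imp(x; m, s) + a•𝟙 for every x : Fin n → ℝ; i.e. the imputation is per-column affine equivariant. -/
import Mathlib


/-- The standardize–predict–destandardize imputation operator with
prediction map `F`, robust location `m` and robust scale `s`. -/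
noncomputable def Imp {n : ℕ} (F : (Fin n → ℝ) → (Fin n → ℝ))
    (x : Fin n → ℝ) (m s : ℝ) : Fin n → ℝ :=
  s • F (s⁻¹ • (x - m • (1 : Fin n → ℝ))) + m • (1 : Fin n → ℝ)

/-- DDC affine-equivariance lemma: if the cellwise prediction map `F` is odd,
then the standardize–predict–destandardize imputation operator is per-column
affine equivariant. -/
theorem imputation_affine_equivariant
    (n : ℕ) (hn : 1 ≤ n) (F : (Fin n → ℝ) → (Fin n → ℝ))
    (hF : ∀ z : Fin n → ℝ, F (-z) = -F z)
    (c a m s : ℝ) (hc : c ≠ 0) (hs : 0 < s) :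
    ∀ x : Fin n → ℝ,
      Imp F (c • x + a • (1 : Fin n → ℝ)) (c * m + a) (|c| * s)
        = c • Imp F x m s + a • (1 : Fin n → ℝ) := by
  intro x
  have harg : c • x + a • (1 : Fin n → ℝ) - (c * m + a) • (1 : Fin n → ℝ)
      = c • (x - m • (1 : Fin n → ℝ)) := by
    ext i
    simp [add_smul]
    ring
  unfold Imp
  rw [harg]
  rcases lt_or_gt_of_ne hc with hneg | hpos
  · have habs : |c| = -c := abs_of_neg hneg
    have hkey : (|c| * s)⁻¹ • c • (x - m • (1 : Fin n → ℝ))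
        = -(s⁻¹ • (x - m • (1 : Fin n → ℝ))) := by
      rw [habs, smul_smul, ← neg_smul]
      congr 1
      field_simp
    rw [hkey, hF, smul_neg, habs]
    ext i
    simp [smul_smul, mul_add]
    ring
  · have habs : |c| = c := abs_of_pos hpos
    have hkey : (|c| * s)⁻¹ • c • (x - m • (1 : Fin n → ℝ))
        = s⁻¹ • (x - m • (1 : Fin n → ℝ)) := by
      rw [habs, smul_smul]
      congr 1
      field_simp
    rw [hkey, habs]
    ext i
    simp [smul_smul, mul_add]
    ring
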